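/- Let $s > 1$ be real and $(t_m)_{m \ge 1}$ a sequence with $t_m \in [-1, 1]$. Then the infinite product $\prod_{m=1}^{\infty}\big(1 + \frac{m^{-s} z}{1 - m^{-s} t_m z}\big)$ converges for every complex $z$ with $|z| < 1$, and its Taylor coefficient of $z^k$ at $0$ equals $\zeta^{\vec{t}}(\{s\}_k) = \sum_{\ell_1 \ge \cdots \ge \ell_k \ge 1} \vec{t}^{\vec\sigma(\vec\ell)} \prod_{j=1}^k \ell_j^{-s}$, which in particular is a convergent series. -/

import Mathlib

/-- Interpolation weight `∏_j t_j^{σ_j(ℓ)}`: factor `t (f (r+1))` for each consecutive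
equality `f r = f (r+1)` of the tuple. -/
def wt (t : ℕ → ℝ) {k : ℕ} (f : Fin k → ℕ) : ℝ :=
  ∏ r ∈ Finset.range k,
    if h : r + 1 < k then
      (if f ⟨r, Nat.lt_of_succ_lt h⟩ = f ⟨r + 1, h⟩ then t (f ⟨r + 1, h⟩) else 1)
    else 1

/-- Summand of the multi-interpolated value `ζ^{t}({s}_k)`. -/
noncomputable def zetaTerm (s : ℝ) (t : ℕ → ℝ) {k : ℕ} (f : Fin k → ℕ) : ℝ :=
  if (∀ j, 1 ≤ f j) ∧ (∀ i j : Fin k, i ≤ j → f j ≤ f i) then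
    wt t f * ∏ j : Fin k, ((f j : ℝ) ^ s)⁻¹
  else 0

/-- Factor of the infinite product, as a function of `z ∈ ℂ`. -/
noncomputable def prodFactor (s : ℝ) (t : ℕ → ℝ) (z : ℂ) (m : ℕ) : ℂ :=
  if 1 ≤ m then
    1 + (((m : ℝ) ^ s : ℝ) : ℂ)⁻¹ * z / (1 - (((m : ℝ) ^ s : ℝ) : ℂ)⁻¹ * (t m : ℝ) * z)
  else 1

/-!
Expanding the `m`-th factor as `∑ₙ m^{-ns} t_m^{n-1} zⁿ` and multiplying out, the product becomes
an absolutely convergent sum over finitely supported exponent vectors `d : ℕ →₀ ℕ` of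
`∏ₘ m^{-s dₘ} t_m^{dₘ-1} z^{dₘ}`; absolute convergence comes from
`∏ₘ (1 + m^{-s}/(1 - |z|)) ≤ exp (ζ(s)/(1 - |z|))`, and the partial products over finite sets
of factors converge to the full sum by dominated convergence. Listing every `m` with multiplicity
`dₘ` in decreasing order identifies `d` with a weakly decreasing tuple `ℓ` of length `∑ dₘ`, and
the term of `d` with the `ζ^t`-summand of `ℓ` times `z^{∑ dₘ}`: the `dₘ` copies of `m` are
adjacent in `ℓ` and contribute `dₘ - 1` equalities. Grouping by length gives the coefficients.
-/

open Finset Filter Topology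

namespace Finsupp

variable {ι : Type*}

noncomputable def supportSubsetInsertEquiv [DecidableEq ι] {a : ι} {S : Finset ι} (ha : a ∉ S) :
    ℕ × {d : ι →₀ ℕ // d.support ⊆ S} ≃ {d : ι →₀ ℕ // d.support ⊆ insert a S} where
  toFun p := ⟨single a p.1 + p.2, support_add.trans (union_subset
    (support_single_subset.trans (singleton_subset_iff.2 (mem_insert_self a S)))
    (p.2.2.trans (subset_insert a S)))⟩
  invFun d := (d.1 a, ⟨d.1.erase a, fun i hi => by
    rw [support_erase, mem_erase] at hi
    exact (mem_insert.1 (d.2 hi.2)).resolve_left hi.1⟩)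
  left_inv := fun ⟨n, d, hd⟩ => by
    have hda : d a = 0 := notMem_support_iff.1 fun h => ha (hd h)
    ext <;> simp [hda, erase_add, erase_single]
  right_inv := fun ⟨d, _⟩ => Subtype.ext (single_add_erase a d)

variable {R : Type*} [NormedCommRing R] {F : ι → ℕ → R}

theorem hasSum_prod_of_support_subset [CompleteSpace R] (h0 : ∀ i, F i 0 = 1)
    (hF : ∀ i, Summable (‖F i ·‖)) (S : Finset ι) :
    Summable (fun d : {d : ι →₀ ℕ // d.support ⊆ S} => ‖d.1.prod F‖) ∧
      HasSum (fun d : {d : ι →₀ ℕ // d.support ⊆ S} => d.1.prod F) (∏ i ∈ S, ∑' n, F i n) := by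
  classical
  induction S using Finset.induction_on with
  | empty =>
    have : Subsingleton {d : ι →₀ ℕ // d.support ⊆ ∅} := ⟨fun d d' => Subtype.ext <| by
      rw [support_eq_empty.1 (subset_empty.1 d.2), support_eq_empty.1 (subset_empty.1 d'.2)]⟩
    refine ⟨Summable.of_finite, ?_⟩
    simpa using hasSum_single (f := fun d : {d : ι →₀ ℕ // d.support ⊆ ∅} => d.1.prod F)
      ⟨0, by simp⟩ fun d hd => (hd (Subsingleton.elim _ _)).elim
  | insert a S ha ih =>
    let e := supportSubsetInsertEquiv ha
    have hprod : ∀ p, (e p).1.prod F = F a p.1 * p.2.1.prod F := fun ⟨n, d, hd⟩ => by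
      have hdisj : Disjoint (single a n).support d.support :=
        disjoint_of_subset_left support_single_subset
          (disjoint_singleton_left.2 fun h => ha (hd h))
      exact (prod_add_index_of_disjoint hdisj F).trans (by rw [prod_single_index (h0 a)])
    have hcomp : (fun d : {d : ι →₀ ℕ // d.support ⊆ insert a S} => d.1.prod F) ∘ e =
        fun p => F a p.1 * p.2.1.prod F := funext hprod
    constructor
    · rw [← e.summable_iff]
      exact ((hF a).mul_norm ih.1).congr fun p => by rw [Function.comp_apply, hprod]
    · rw [← e.hasSum_iff, hcomp, prod_insert ha]
      have hFa : HasSum (F a) (∑' n, F a n) := (hF a).of_norm.hasSum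
      have hsum := summable_mul_of_summable_norm (hF a) ih.1
      have hmul := hFa.mul ih.2 hsum
      exact hmul

theorem summable_norm_prod [NormOneClass R] (h0 : ∀ i, F i 0 = 1)
    (hF : ∀ i, Summable (‖F i ·‖)) (htail : Summable fun i => ∑' n, ‖F i (n + 1)‖) :
    Summable fun d : ι →₀ ℕ => ‖d.prod F‖ := by
  classical
  have hu : ∀ i, ∑' n, ‖F i n‖ = 1 + ∑' n, ‖F i (n + 1)‖ := fun i => by
    rw [(hF i).tsum_eq_zero_add, h0, norm_one]
  refine summable_of_sum_le (c := Real.exp (∑' i, ∑' n, ‖F i (n + 1)‖))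
    (fun d => norm_nonneg _) fun T => ?_
  set S := T.sup support
  have hS := (hasSum_prod_of_support_subset (F := fun i n => ‖F i n‖) (by simp [h0])
    (fun i => by simpa using hF i) S).2
  calc ∑ d ∈ T, ‖d.prod F‖
      ≤ ∑ d ∈ T, {d : ι →₀ ℕ | d.support ⊆ S}.indicator (·.prod fun i n => ‖F i n‖) d :=
        Finset.sum_le_sum fun d hd => by
          rw [Set.indicator_of_mem (show d.support ⊆ S from le_sup hd)]
          exact Finset.norm_prod_le _ _
    _ ≤ ∏ i ∈ S, ∑' n, ‖F i n‖ :=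
        sum_le_hasSum T (fun d _ => Set.indicator_nonneg (fun d _ => Finset.prod_nonneg fun i _ =>
          norm_nonneg _) d) (hasSum_subtype_iff_indicator.1 hS)
    _ ≤ Real.exp (∑ i ∈ S, ∑' n, ‖F i (n + 1)‖) := by
        simp only [hu]
        exact Real.prod_one_add_le_exp_sum S fun i => tsum_nonneg fun n => norm_nonneg _
    _ ≤ Real.exp (∑' i, ∑' n, ‖F i (n + 1)‖) :=
        Real.exp_le_exp.2 (htail.sum_le_tsum S fun i _ => tsum_nonneg fun n => norm_nonneg _)

theorem hasProd_tsum [CompleteSpace R] [NormOneClass R] (h0 : ∀ i, F i 0 = 1)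
    (hF : ∀ i, Summable (‖F i ·‖)) (htail : Summable fun i => ∑' n, ‖F i (n + 1)‖) :
    HasProd (fun i => ∑' n, F i n) (∑' d : ι →₀ ℕ, d.prod F) := by
  have hfin : ∀ S : Finset ι, ∏ i ∈ S, ∑' n, F i n =
      ∑' d : ι →₀ ℕ, {d : ι →₀ ℕ | d.support ⊆ S}.indicator (·.prod F) d := fun S =>
    ((hasSum_subtype_iff_indicator (f := fun d : ι →₀ ℕ => d.prod F)).1
      (hasSum_prod_of_support_subset h0 hF S).2).tsum_eq.symm
  simp only [HasProd, hfin]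
  refine tendsto_tsum_of_dominated_convergence (f := fun (S : Finset ι) (d : ι →₀ ℕ) =>
      {d : ι →₀ ℕ | d.support ⊆ S}.indicator (·.prod F) d)
    (summable_norm_prod h0 hF htail) (fun d => ?_)
    (Eventually.of_forall fun S d => norm_indicator_le_norm_self _ d)
  exact tendsto_const_nhds.congr' ((eventually_ge_atTop d.support).mono
    fun S hS => (Set.indicator_of_mem hS _).symm)

end Finsupp

theorem hasSum_pow_mul_pow_sub_one_mul_pow {𝕜 : Type*} [NormedField 𝕜] {a b z : 𝕜}
    (h : ‖a * b * z‖ < 1) :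
    HasSum (fun n => a ^ n * b ^ (n - 1) * z ^ n) (1 + a * z / (1 - a * b * z)) := by
  have hshift : (fun n => a ^ (n + 1) * b ^ (n + 1 - 1) * z ^ (n + 1)) =
      fun n => a * z * (a * b * z) ^ n := funext fun n => by
    rw [Nat.add_sub_cancel]
    ring
  rw [← hasSum_nat_add_iff' 1, range_one, sum_singleton, hshift]
  simpa [div_eq_mul_inv] using (hasSum_geometric_of_norm_lt_one h).mul_left (a * z)

theorem inv_natCast_rpow_le_one {s : ℝ} (hs : 0 ≤ s) (m : ℕ) : ((m : ℝ) ^ s)⁻¹ ≤ 1 := by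
  rw [← Real.inv_rpow m.cast_nonneg]
  exact Real.rpow_le_one (by positivity) (Nat.cast_inv_le_one m) hs

-- This holds at `m = 0` too, because `((0 : ℝ) ^ s)⁻¹ = 0`.
theorem prodFactor_eq {s : ℝ} (hs : s ≠ 0) (t : ℕ → ℝ) (z : ℂ) (m : ℕ) :
    prodFactor s t z m =
      1 + (((m : ℝ) ^ s : ℝ) : ℂ)⁻¹ * z / (1 - (((m : ℝ) ^ s : ℝ) : ℂ)⁻¹ * (t m : ℝ) * z) := by
  rcases m.eq_zero_or_pos with rfl | hm
  · simp [prodFactor, Real.zero_rpow hs]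
  · simp [prodFactor, Nat.one_le_iff_ne_zero.2 hm.ne']

-- Coefficient of `zⁿ` in `prodFactor s t z m`; the truncated `n - 1` makes it `1` at `n = 0`.
noncomputable def factorCoeff (s : ℝ) (t : ℕ → ℝ) (m n : ℕ) : ℝ :=
  ((m : ℝ) ^ s)⁻¹ ^ n * t m ^ (n - 1)

section FactorCoeff

variable {s : ℝ} {t : ℕ → ℝ}

theorem abs_factorCoeff_succ_le (hs : 0 ≤ s) (ht : ∀ m, |t m| ≤ 1) (m n : ℕ) :
    |factorCoeff s t m (n + 1)| ≤ ((m : ℝ) ^ s)⁻¹ := by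
  have ha : 0 ≤ ((m : ℝ) ^ s)⁻¹ := by positivity
  rw [factorCoeff, Nat.add_sub_cancel, abs_mul, abs_pow, abs_pow, abs_of_nonneg ha]
  calc ((m : ℝ) ^ s)⁻¹ ^ (n + 1) * |t m| ^ n ≤ ((m : ℝ) ^ s)⁻¹ * 1 :=
        mul_le_mul (pow_le_of_le_one ha (inv_natCast_rpow_le_one hs m) n.succ_ne_zero)
          (pow_le_one₀ (abs_nonneg _) (ht m)) (by positivity) ha
    _ = ((m : ℝ) ^ s)⁻¹ := mul_one _

theorem abs_factorCoeff_le_one (hs : 0 ≤ s) (ht : ∀ m, |t m| ≤ 1) (m : ℕ) :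
    ∀ n, |factorCoeff s t m n| ≤ 1
  | 0 => by simp [factorCoeff]
  | n + 1 => (abs_factorCoeff_succ_le hs ht m n).trans (inv_natCast_rpow_le_one hs m)

theorem hasSum_factorCoeff_mul_pow (hs : 0 < s) (ht : ∀ m, |t m| ≤ 1) {z : ℂ} (hz : ‖z‖ < 1)
    (m : ℕ) : HasSum (fun n => (factorCoeff s t m n : ℂ) * z ^ n) (prodFactor s t z m) := by
  have hnorm : ‖(((m : ℝ) ^ s : ℝ) : ℂ)⁻¹ * (t m : ℝ) * z‖ < 1 := by
    rw [norm_mul, norm_mul, norm_inv, Complex.norm_real, Complex.norm_real, Real.norm_eq_abs,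
      Real.norm_eq_abs, abs_of_nonneg (by positivity)]
    calc ((m : ℝ) ^ s)⁻¹ * |t m| * ‖z‖ ≤ 1 * 1 * ‖z‖ := by
          gcongr
          · exact inv_natCast_rpow_le_one hs.le m
          · exact ht m
      _ < 1 := by simpa using hz
  have hcoeff : (fun n => (factorCoeff s t m n : ℂ) * z ^ n) = fun n =>
      (((m : ℝ) ^ s : ℝ) : ℂ)⁻¹ ^ n * ((t m : ℝ) : ℂ) ^ (n - 1) * z ^ n := by
    funext n
    push_cast [factorCoeff]
    rfl
  rw [prodFactor_eq hs.ne', hcoeff]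
  exact hasSum_pow_mul_pow_sub_one_mul_pow hnorm

theorem summable_norm_factorCoeff_mul_pow (hs : 0 ≤ s) (ht : ∀ m, |t m| ≤ 1) {z : ℂ}
    (hz : ‖z‖ < 1) (m : ℕ) : Summable fun n => ‖(factorCoeff s t m n : ℂ) * z ^ n‖ := by
  refine (summable_geometric_of_lt_one (norm_nonneg z) hz).of_nonneg_of_le
    (fun n => norm_nonneg _) fun n => ?_
  rw [norm_mul, norm_pow, Complex.norm_real, Real.norm_eq_abs]
  exact mul_le_of_le_one_left (by positivity) (abs_factorCoeff_le_one hs ht m n)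

theorem summable_tsum_norm_factorCoeff_mul_pow (hs : 1 < s) (ht : ∀ m, |t m| ≤ 1) {z : ℂ}
    (hz : ‖z‖ < 1) :
    Summable fun m => ∑' n, ‖(factorCoeff s t m (n + 1) : ℂ) * z ^ (n + 1)‖ := by
  have hgeom := summable_geometric_of_lt_one (norm_nonneg z) hz
  refine ((Real.summable_nat_rpow_inv.2 hs).mul_right (1 - ‖z‖)⁻¹).of_nonneg_of_le
    (fun m => tsum_nonneg fun n => norm_nonneg _) fun m => ?_
  rw [← tsum_geometric_of_lt_one (norm_nonneg z) hz, ← tsum_mul_left]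
  refine ((summable_norm_factorCoeff_mul_pow (zero_le_one.trans hs.le) ht hz m).comp_injective
    (add_left_injective 1)).tsum_le_tsum (fun n => ?_) (hgeom.mul_left _)
  rw [norm_mul, norm_pow, Complex.norm_real, Real.norm_eq_abs]
  exact mul_le_mul (abs_factorCoeff_succ_le (zero_le_one.trans hs.le) ht m n)
    (pow_le_pow_of_le_one (norm_nonneg z) hz.le n.le_succ) (by positivity) (by positivity)

end FactorCoeff

theorem wt_cons_cons (t : ℕ → ℝ) (a b : ℕ) (l : List ℕ) :
    wt t (a :: b :: l).get = (if a = b then t b else 1) * wt t (b :: l).get := by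
  simp only [wt, List.length_cons]
  rw [prod_range_succ', mul_comm]
  simp

theorem wt_get_of_pairwise (t : ℕ → ℝ) {l : List ℕ} (hl : l.Pairwise (· ≥ ·)) :
    wt t l.get = ∏ m ∈ l.toFinset, t m ^ (l.count m - 1) := by
  induction l with
  | nil => simp [wt]
  | cons a l ih =>
    cases l with
    | nil => simp [wt]
    | cons b l =>
      rw [wt_cons_cons, ih hl.of_cons]
      have hcount : ∀ m, m ≠ a → (a :: b :: l).count m = (b :: l).count m := fun m hma =>
        List.count_cons_of_ne (Ne.symm hma)
      by_cases hab : a = b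
      · subst hab
        have hmem : a ∈ (a :: l).toFinset := by simp
        rw [if_pos rfl, show (a :: a :: l).toFinset = (a :: l).toFinset by simp,
          ← mul_prod_erase _ _ hmem, ← mul_prod_erase _ _ hmem, ← mul_assoc, ← pow_succ']
        congr 1
        · simp [List.count_cons_self]
        · exact prod_congr rfl fun m hm => by
            rw [hcount m (ne_of_mem_erase hm)]
      · have hlt : b < a := lt_of_le_of_ne (List.rel_of_pairwise_cons hl List.mem_cons_self)
          (Ne.symm hab)
        have hmin : a ∉ b :: l := fun h => by
          rcases List.mem_cons.1 h with h | h
          · exact hab h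
          · exact absurd (List.rel_of_pairwise_cons hl.of_cons h) (by omega)
        have hca : (a :: b :: l).count a = 1 := by
          rw [List.count_cons_self, List.count_eq_zero.2 hmin]
        rw [if_neg hab, one_mul,
          show (a :: b :: l).toFinset = insert a (b :: l).toFinset from List.toFinset_cons,
          prod_insert (mt List.mem_toFinset.1 hmin), hca, Nat.sub_self, pow_zero, one_mul]
        exact prod_congr rfl fun m hm => by
          rw [hcount m (by rintro rfl; exact hmin (List.mem_toFinset.1 hm))]

-- No positivity assumption: an entry `0` makes both sides vanish, as `((0 : ℝ) ^ s)⁻¹ = 0`.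
theorem zetaTerm_get_of_pairwise {s : ℝ} (hs : s ≠ 0) (t : ℕ → ℝ) {l : List ℕ}
    (hl : l.Pairwise (· ≥ ·)) :
    zetaTerm s t l.get = ∏ m ∈ l.toFinset, factorCoeff s t m (l.count m) := by
  rw [zetaTerm]
  split_ifs with h
  · have hprod : ∏ j : Fin l.length, ((l.get j : ℝ) ^ s)⁻¹ =
        ∏ m ∈ l.toFinset, ((m : ℝ) ^ s)⁻¹ ^ l.count m := by
      simp only [List.get_eq_getElem, Fin.prod_univ_fun_getElem (f := fun m : ℕ => ((m : ℝ) ^ s)⁻¹),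
        prod_list_map_count]
    rw [wt_get_of_pairwise t hl, hprod, ← prod_mul_distrib]
    exact prod_congr rfl fun m _ => mul_comm _ _
  · have hsorted : ∀ i j : Fin l.length, i ≤ j → l.get j ≤ l.get i := fun i j hij =>
      hij.eq_or_lt.elim (fun h => h ▸ le_rfl) (List.pairwise_iff_get.1 hl i j)
    obtain ⟨j, hj⟩ : ∃ j, l.get j = 0 := by
      by_contra! hne
      exact h ⟨fun j => Nat.one_le_iff_ne_zero.2 (hne j), hsorted⟩
    have h0 : 0 ∈ l := hj ▸ List.get_mem l j
    refine (prod_eq_zero (List.mem_toFinset.2 h0) ?_).symm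
    simp [factorCoeff, Real.zero_rpow hs, (List.count_pos_iff.2 h0).ne']

theorem zetaTerm_get_mul_pow {s : ℝ} (hs : s ≠ 0) (t : ℕ → ℝ) {l : List ℕ}
    (hl : l.Pairwise (· ≥ ·)) (z : ℂ) :
    (zetaTerm s t l.get : ℂ) * z ^ l.length =
      ∏ m ∈ l.toFinset, (factorCoeff s t m (l.count m) : ℂ) * z ^ l.count m := by
  rw [zetaTerm_get_of_pairwise hs t hl, prod_mul_distrib, prod_pow_eq_pow_sum,
    List.sum_toFinset_count_eq_length, Complex.ofReal_prod]

noncomputable def descList (d : ℕ →₀ ℕ) : List ℕ :=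
  (Finsupp.toMultiset d).sort (· ≥ ·)

theorem descList_pairwise (d : ℕ →₀ ℕ) : (descList d).Pairwise (· ≥ ·) :=
  Multiset.pairwise_sort _ _

theorem coe_descList (d : ℕ →₀ ℕ) : (descList d : Multiset ℕ) = Finsupp.toMultiset d :=
  Multiset.sort_eq _ _

theorem descList_injective : Function.Injective descList := fun d d' h => by
  rw [← Finsupp.toMultiset_toFinsupp d, ← coe_descList, h, coe_descList,
    Finsupp.toMultiset_toFinsupp]

theorem count_descList (d : ℕ →₀ ℕ) (m : ℕ) : (descList d).count m = d m := by
  rw [← Multiset.coe_count, coe_descList, Finsupp.count_toMultiset]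

theorem toFinset_descList (d : ℕ →₀ ℕ) : (descList d).toFinset = d.support := by
  rw [← List.toFinset_coe, coe_descList, Finsupp.toFinset_toMultiset]

theorem descList_toFinsupp_of_pairwise {l : List ℕ} (hl : l.Pairwise (· ≥ ·)) :
    descList (Multiset.toFinsupp l) = l := by
  rw [descList, Multiset.toFinsupp_toMultiset, Multiset.coe_sort, List.mergeSort_eq_self _ hl]

-- `descList` is a bijection onto the weakly decreasing lists, off which `zetaTerm` vanishes.
theorem hasSum_sigma_zetaTerm {s : ℝ} (hs : s ≠ 0) (t : ℕ → ℝ) (z : ℂ) {a : ℂ}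
    (h : HasSum (fun d : ℕ →₀ ℕ => d.prod fun m n => (factorCoeff s t m n : ℂ) * z ^ n) a) :
    HasSum (fun p : Σ k, (Fin k → ℕ) => (zetaTerm s t p.2 : ℂ) * z ^ p.1) a := by
  refine (Function.Injective.hasSum_iff (g := List.equivSigmaTuple ∘ descList)
    (List.equivSigmaTuple.injective.comp descList_injective) fun ⟨k, f⟩ hf => ?_).1 ?_
  · by_contra hne
    have hsorted : ∀ i j : Fin k, i ≤ j → f j ≤ f i := by
      by_contra hns
      exact hne (by simp [zetaTerm, hns])
    refine hf ⟨Multiset.toFinsupp (List.ofFn f), ?_⟩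
    rw [Function.comp_apply, descList_toFinsupp_of_pairwise
      (List.pairwise_ofFn.2 fun i j hij => hsorted i j hij.le)]
    exact List.equivSigmaTuple.apply_symm_apply ⟨k, f⟩
  · convert h using 2 with d
    exact (zetaTerm_get_mul_pow hs t (descList_pairwise d) z).trans (by
      simp only [toFinset_descList, count_descList, Finsupp.prod])

theorem summable_fin_pi_prod_of_nonneg {β : Type*} {g : β → ℝ} (hg0 : ∀ b, 0 ≤ g b)
    (hg : Summable g) : ∀ k : ℕ, Summable fun f : Fin k → β => ∏ j, g (f j)
  | 0 => Summable.of_finite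
  | k + 1 => by
    rw [← (Fin.consEquiv fun _ => β).summable_iff]
    simpa [Function.comp_def, Fin.prod_univ_succ] using
      hg.mul_of_nonneg (summable_fin_pi_prod_of_nonneg hg0 hg k) hg0
        fun f => prod_nonneg fun j _ => hg0 (f j)

theorem abs_wt_le_one {t : ℕ → ℝ} (ht : ∀ m, |t m| ≤ 1) {k : ℕ} (f : Fin k → ℕ) :
    |wt t f| ≤ 1 := by
  rw [wt, abs_prod]
  refine prod_le_one (fun r _ => abs_nonneg _) fun r _ => ?_
  split_ifs <;> simp [ht]

theorem abs_zetaTerm_le (s : ℝ) {t : ℕ → ℝ} (ht : ∀ m, |t m| ≤ 1) {k : ℕ} (f : Fin k → ℕ) :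
    |zetaTerm s t f| ≤ ∏ j, ((f j : ℝ) ^ s)⁻¹ := by
  have hnonneg : 0 ≤ ∏ j, ((f j : ℝ) ^ s)⁻¹ := prod_nonneg fun j _ => by positivity
  rw [zetaTerm]
  split_ifs
  · rw [abs_mul, abs_of_nonneg hnonneg]
    exact mul_le_of_le_one_left hnonneg (abs_wt_le_one ht f)
  · simpa using hnonneg

theorem summable_zetaTerm {s : ℝ} (hs : 1 < s) {t : ℕ → ℝ} (ht : ∀ m, |t m| ≤ 1) (k : ℕ) :
    Summable fun f : Fin k → ℕ => zetaTerm s t f :=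
  (summable_fin_pi_prod_of_nonneg (fun n => by positivity) (Real.summable_nat_rpow_inv.2 hs)
    k).of_norm_bounded (abs_zetaTerm_le s ht)

theorem summable_and_hasProd_prodFactor {s : ℝ} (hs : 1 < s) {t : ℕ → ℝ} (ht : ∀ m, |t m| ≤ 1)
    {z : ℂ} (hz : ‖z‖ < 1) :
    Summable (fun d : ℕ →₀ ℕ => d.prod fun m n => (factorCoeff s t m n : ℂ) * z ^ n) ∧
      HasProd (prodFactor s t z)
        (∑' d : ℕ →₀ ℕ, d.prod fun m n => (factorCoeff s t m n : ℂ) * z ^ n) := by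
  have h0 : ∀ m, (factorCoeff s t m 0 : ℂ) * z ^ 0 = 1 := by simp [factorCoeff]
  have hF := summable_norm_factorCoeff_mul_pow (zero_le_one.trans hs.le) ht hz
  have htail := summable_tsum_norm_factorCoeff_mul_pow hs ht hz
  refine ⟨(Finsupp.summable_norm_prod h0 hF htail).of_norm, ?_⟩
  simpa only [(hasSum_factorCoeff_mul_pow (zero_lt_one.trans hs) ht hz _).tsum_eq] using
    Finsupp.hasProd_tsum h0 hF htail

/-- For `s > 1` and `|t_m| ≤ 1`: each `ζ^{t}({s}_k)` is a convergent series, the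
infinite product `∏_{m≥1} (1 + m^{-s}z/(1 - m^{-s}t_m z))` converges for `|z| < 1`,
and its Taylor coefficients are the values `ζ^{t}({s}_k)`. -/
theorem infinite_product_generating_function
    (s : ℝ) (hs : 1 < s) (t : ℕ → ℝ) (ht : ∀ m, |t m| ≤ 1) :
    (∀ k : ℕ, Summable (fun f : Fin k → ℕ => zetaTerm s t f)) ∧
    ∀ z : ℂ, ‖z‖ < 1 →
      Multipliable (prodFactor s t z) ∧
      HasSum (fun k : ℕ => ((∑' f : Fin k → ℕ, zetaTerm s t f : ℝ) : ℂ) * z ^ k)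
        (∏' m : ℕ, prodFactor s t z m) := by
  refine ⟨summable_zetaTerm hs ht, fun z hz => ?_⟩
  obtain ⟨hsum, hprod⟩ := summable_and_hasProd_prodFactor hs ht hz
  refine ⟨hprod.multipliable, ?_⟩
  rw [hprod.tprod_eq]
  exact (hasSum_sigma_zetaTerm (zero_lt_one.trans hs).ne' t z hsum.hasSum).sigma fun k =>
    (Complex.hasSum_ofReal.2 (summable_zetaTerm hs ht k).hasSum).mul_right (z ^ k)
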